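/- arXiv:1601.03378 — 2 statements merged into one kernel-verified Lean document; each statement's English description precedes it below -/
import Mathlib

section
/- For any leaves l, l_pa, l_na, l_pb, l_nb (values in {0,1,...,N} with 0 meaning 'nonexistent'), the ratio (P(l,l_pa)·P(l_na,l)·P(l_nb,l_pb)) / (P(l_na,l_pa)·P(l,l_pb)·P(l_nb,l)) is at most (p₁/p₂)², under the assumptions p₂ ≤ 1/N ≤ p₁ and 0 < p₂ ≤ p₁. -/
noncomputable def kdelta (N : ℕ) (p : ℝ) (z x : ℕ) : ℝ :=
  if x = 0 then (1 / (N : ℝ) - p / ((N : ℝ) - 1)) / ((1 - p) - p / ((N : ℝ) - 1))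
  else if z = x then 1 else 0

noncomputable def Ptrans (N : ℕ) (p : ℝ) (z x : ℕ) : ℝ :=
  p / ((N : ℝ) - 1) + ((1 - p) - p / ((N : ℝ) - 1)) * kdelta N p z x

/-! Every transition probability lies in `[p₂, p₁]`, and `P(z, x)` with `z ≠ x` is the smallest
entry of column `x` (column `0` is constant). Pairing the factor `P(l_na, l)` of the numerator with
`P(l_nb, l)` of the denominator when `l_na ≠ l`, and `P(l, l_pa)` with `P(l_na, l_pa)` when
`l_na = l`, leaves two numerator factors `≤ p₁` over two denominator factors `≥ p₂`. -/

theorem div_mul_mul_le_sq {a b c d e f m M : ℝ} (hm : 0 < m) (ha : 0 < a) (hab : a ≤ b)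
    (hc : 0 ≤ c) (hcM : c ≤ M) (hd : 0 ≤ d) (hdM : d ≤ M) (he : m ≤ e) (hf : m ≤ f) :
    a * c * d / (b * e * f) ≤ (M / m) ^ 2 := by
  have hM : 0 ≤ M := hc.trans hcM
  calc a * c * d / (b * e * f) = a / b * (c / e) * (d / f) := by
        rw [mul_div_mul_comm, mul_div_mul_comm]
    _ ≤ 1 * (M / m) * (M / m) := by
        have hMm : 0 ≤ M / m := div_nonneg hM hm.le
        refine mul_le_mul (mul_le_mul ?_ ?_ ?_ zero_le_one) ?_ ?_ (by simpa using hMm)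
        · exact div_le_one_of_le₀ hab (ha.le.trans hab)
        · exact div_le_div₀ hM hcM hm he
        · exact div_nonneg hc (hm.trans_le he).le
        · exact div_le_div₀ hM hdM hm hf
        · exact div_nonneg hd (hm.trans_le hf).le
    _ = (M / m) ^ 2 := by ring

section Ptrans

variable {N : ℕ} {p : ℝ}

/-- If `p₁ = p₂` the extended delta is `0 / 0`, but then `p₂ = 1/N` anyway. -/
theorem Ptrans_zero_right (h21 : p / ((N : ℝ) - 1) ≤ 1 / N) (h11 : (1 : ℝ) / N ≤ 1 - p)
    (z : ℕ) : Ptrans N p z 0 = 1 / N := by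
  simp only [Ptrans, kdelta, if_true]
  by_cases hgap : (1 - p) - p / ((N : ℝ) - 1) = 0
  · rw [hgap, zero_mul]
    linarith
  · rw [mul_div_cancel₀ _ hgap]
    ring

theorem Ptrans_self {x : ℕ} (hx : x ≠ 0) : Ptrans N p x x = 1 - p := by
  simp [Ptrans, kdelta, hx]

theorem Ptrans_of_ne {z x : ℕ} (hx : x ≠ 0) (hzx : z ≠ x) :
    Ptrans N p z x = p / ((N : ℝ) - 1) := by
  simp [Ptrans, kdelta, hx, hzx]

theorem Ptrans_mem_Icc (h21 : p / ((N : ℝ) - 1) ≤ 1 / N) (h11 : (1 : ℝ) / N ≤ 1 - p)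
    (h2le1 : p / ((N : ℝ) - 1) ≤ 1 - p) (z x : ℕ) : Ptrans N p z x ∈ Set.Icc (p / ((N : ℝ) - 1)) (1 - p) := by
  rcases eq_or_ne x 0 with rfl | hx
  · rw [Ptrans_zero_right h21 h11]
    exact ⟨h21, h11⟩
  rcases eq_or_ne z x with rfl | hzx
  · rw [Ptrans_self hx]
    exact ⟨h2le1, le_rfl⟩
  · rw [Ptrans_of_ne hx hzx]
    exact ⟨le_rfl, h2le1⟩

theorem Ptrans_le_of_ne (h21 : p / ((N : ℝ) - 1) ≤ 1 / N) (h11 : (1 : ℝ) / N ≤ 1 - p)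
    (h2le1 : p / ((N : ℝ) - 1) ≤ 1 - p) {z x : ℕ} (hzx : z ≠ x) (w : ℕ) : Ptrans N p z x ≤ Ptrans N p w x := by
  rcases eq_or_ne x 0 with rfl | hx
  · rw [Ptrans_zero_right h21 h11, Ptrans_zero_right h21 h11]
  · rw [Ptrans_of_ne hx hzx]
    exact (Ptrans_mem_Icc h21 h11 h2le1 w x).1

end Ptrans

theorem three_factor_ratio_le_general (N : ℕ) (p : ℝ)
    (h21 : p / ((N : ℝ) - 1) ≤ 1 / N) (h11 : (1 : ℝ) / N ≤ 1 - p)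
    (hp2pos : 0 < p / ((N : ℝ) - 1)) (h2le1 : p / ((N : ℝ) - 1) ≤ 1 - p)
    (l lpa lna lpb lnb : ℕ) :
    (Ptrans N p l lpa * Ptrans N p lna l * Ptrans N p lnb lpb) /
      (Ptrans N p lna lpa * Ptrans N p l lpb * Ptrans N p lnb l) ≤
    ((1 - p) / (p / ((N : ℝ) - 1))) ^ 2 := by
  have hmem := Ptrans_mem_Icc h21 h11 h2le1
  have hpos : ∀ z x, 0 < Ptrans N p z x := fun z x => hp2pos.trans_le (hmem z x).1
  rcases eq_or_ne lna l with rfl | hne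
  · exact div_mul_mul_le_sq hp2pos (hpos _ _) le_rfl (hpos _ _).le (hmem _ _).2
      (hpos _ _).le (hmem _ _).2 (hmem _ _).1 (hmem _ _).1
  · calc _ = Ptrans N p lna l * Ptrans N p l lpa * Ptrans N p lnb lpb /
          (Ptrans N p lnb l * Ptrans N p lna lpa * Ptrans N p l lpb) := by ring
      _ ≤ _ := div_mul_mul_le_sq hp2pos (hpos _ _) (Ptrans_le_of_ne h21 h11 h2le1 hne _)
          (hpos _ _).le (hmem _ _).2 (hpos _ _).le (hmem _ _).2 (hmem _ _).1 (hmem _ _).1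

theorem three_factor_ratio_le (N : ℕ) (hN : 2 ≤ N) (p : ℝ) (hp0 : 0 < p)
    (hp : p < ((N : ℝ) - 1) / N)
    (h21 : p / ((N : ℝ) - 1) ≤ 1 / N) (h11 : (1 : ℝ) / N ≤ 1 - p)
    (hp2pos : 0 < p / ((N : ℝ) - 1)) (h2le1 : p / ((N : ℝ) - 1) ≤ 1 - p)
    (l lpa lna lpb lnb : ℕ) (hl : l ≤ N) (hlpa : lpa ≤ N) (hlna : lna ≤ N)
    (hlpb : lpb ≤ N) (hlnb : lnb ≤ N) :
    (Ptrans N p l lpa * Ptrans N p lna l * Ptrans N p lnb lpb) /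
      (Ptrans N p lna lpa * Ptrans N p l lpb * Ptrans N p lnb l) ≤
    ((1 - p) / (p / ((N : ℝ) - 1))) ^ 2 :=
  three_factor_ratio_le_general N p h21 h11 hp2pos h2le1 l lpa lna lpb lnb
end

section
/- Under the capacity constraint above, the observed sequence consisting of M_L = Z(k+1) + C + 1 accesses all to the same leaf has probability 0 under the real sequence accessing M_L distinct elements (1, 2, ..., M_L), while it has positive probability under the real sequence accessing the same element M_L times; hence the pure ε-DP ratio is unbounded and δ > 0 is necessary. -/
theorem delta_is_necessary (Z k C : ℕ) (hZ : 1 ≤ Z)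
    (PrModel : (Fin (Z * (k + 1) + C + 1) → ℕ) → (Fin (Z * (k + 1) + C + 1) → ℕ) → ℝ)
    -- capacity constraint: probability 0 if some leaf observes more than
    -- `Z(k+1)+C` distinct real elements
    (hcap : ∀ r o : Fin (Z * (k + 1) + C + 1) → ℕ,
      (∃ v : ℕ, Z * (k + 1) + C <
          ((Finset.univ.filter (fun i => o i = v)).image r).card) →
      PrModel r o = 0)
    -- otherwise the probability is a product of positive factors
    (hpos : ∀ r o : Fin (Z * (k + 1) + C + 1) → ℕ,
      (¬ ∃ v : ℕ, Z * (k + 1) + C <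
          ((Finset.univ.filter (fun i => o i = v)).image r).card) →
      0 < PrModel r o) :
    PrModel (fun i => (i : ℕ)) (fun _ => 1) = 0 ∧
    0 < PrModel (fun _ => 0) (fun _ => 1) ∧
    ∀ ε : ℝ, ¬ (PrModel (fun _ => 0) (fun _ => 1) ≤
        Real.exp ε * PrModel (fun i => (i : ℕ)) (fun _ => 1)) := by
  have h0 : PrModel (fun i => (i : ℕ)) (fun _ => 1) = 0 := by
    apply hcap
    refine ⟨1, ?_⟩
    have hfilter : (Finset.univ.filter (fun i : Fin (Z * (k + 1) + C + 1) =>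
        (fun _ => 1) i = 1)) = Finset.univ := by
      simp
    rw [hfilter]
    rw [Finset.card_image_of_injective _ (fun a b h => Fin.val_injective h)]
    simp
  have h1 : 0 < PrModel (fun _ => 0) (fun _ => 1) := by
    apply hpos
    rintro ⟨v, hv⟩
    have : ((Finset.univ.filter (fun i : Fin (Z * (k + 1) + C + 1) =>
        (1:ℕ) = v)).image (fun _ => (0:ℕ))).card ≤ 1 := by
      apply Finset.card_le_one.mpr
      intro a ha b hb
      simp at ha hb; omega
    have hZ' : 1 ≤ Z * (k + 1) + C := by nlinarith
    omega
  refine ⟨h0, h1, fun ε h => ?_⟩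
  rw [h0, mul_zero] at h
  linarith
end
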